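/- arXiv:1911.00204 — 3 statements merged into one kernel-verified Lean document; each statement's English description precedes it below -/
import Mathlib

section
/- Consider the random coefficients model: y₀ = X₀β₀ + ε₀ and y₁ = X₁β₁ + ε₁, where X₀ is a real n₀×k matrix with X₀ᵀX₀ invertible, X₁ is a real n₁×k matrix whose columns are standardized (for each column l, ∑_{i∈Fin n₁} (X₁)_{il}² = n₁), β₀ ∈ ℝᵏ is fixed, and β₁ = β₀ + η. Here ε₀ : Ω → ℝ^{n₀}, ε₁ : Ω → ℝ^{n₁}, η : Ω → ℝᵏ are square-integrable random vectors on a probability space (Ω, μ) with: E[ε₀ᵢ] = E[ε₁ᵢ] = E[ηₗ] = 0 for all entries; E[ε₀ᵢε₀ᵢ'] = σ₀² if i = i' and 0 otherwise; E[ε₁ᵢε₁ᵢ'] = σ₁² if i = i' and 0 otherwise; E[ηₗηₗ'] = σ_η² if l = l' and 0 otherwise; and all cross products between distinct vectors have zero expectation (E[ε₀ᵢε₁ⱼ] = E[ε₀ᵢηₗ] = E[ε₁ⱼηₗ] = 0). Let ŷ_{1|0} = X₁(X₀ᵀX₀)⁻¹X₀ᵀy₀. Then (1/n₁)·E[(y₁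 − ŷ_{1|0})ᵀ(y₁ − ŷ_{1|0})] = σ₁² + k·σ_η² + (σ₀²/n₁)·tr((X₀ᵀX₀)⁻¹X₁ᵀX₁). -/
open Matrix MeasureTheory

lemma L2_int_mul {Ω : Type*} [MeasurableSpace Ω] {μ : Measure Ω} {f g : Ω → ℝ}
    (hf : MemLp f 2 μ) (hg : MemLp g 2 μ) : Integrable (fun ω => f ω * g ω) μ := by
  have h : MemLp (f • g) 1 μ :=
    hg.smul hf (hpqr := ⟨by rw [inv_one,
      ENNReal.inv_two_add_inv_two]⟩)
  exact memLp_one_iff_integrable.mp h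

lemma int_mul_comm {Ω : Type*} [MeasurableSpace Ω] (μ : Measure Ω) (f g : Ω → ℝ) :
    ∫ ω, f ω * g ω ∂μ = ∫ ω, g ω * f ω ∂μ := by simp_rw [mul_comm]

lemma exp_quad {Ω : Type*} [MeasurableSpace Ω] (μ : Measure Ω) {ι : Type*} [Fintype ι]
    [DecidableEq ι]
    (Z : Ω → ι → ℝ) (hL2 : ∀ a, MemLp (fun ω => Z ω a) 2 μ)
    (C : ι → ι → ℝ) (hC : ∀ a b, ∫ ω, Z ω a * Z ω b ∂μ = C a b)
    {n : ℕ} (M : Matrix (Fin n) ι ℝ) :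
    ∫ ω, (M *ᵥ Z ω) ⬝ᵥ (M *ᵥ Z ω) ∂μ = ∑ j, ∑ a, ∑ b, M j a * M j b * C a b := by
  have hint : ∀ a b, Integrable (fun ω => Z ω a * Z ω b) μ :=
    fun a b => L2_int_mul (hL2 a) (hL2 b)
  have key : ∀ ω, (M *ᵥ Z ω) ⬝ᵥ (M *ᵥ Z ω)
      = ∑ j, ∑ a, ∑ b, M j a * M j b * (Z ω a * Z ω b) := by
    intro ω
    simp only [dotProduct, mulVec, Finset.sum_mul_sum]
    refine Finset.sum_congr rfl fun j _ => Finset.sum_congr rfl fun a _ =>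
      Finset.sum_congr rfl fun b _ => by ring
  simp_rw [key]
  rw [integral_finset_sum _ (fun j _ => integrable_finset_sum _ fun a _ =>
    integrable_finset_sum _ fun b _ => (hint a b).const_mul _)]
  refine Finset.sum_congr rfl fun j _ => ?_
  rw [integral_finset_sum _ (fun a _ => integrable_finset_sum _ fun b _ =>
    (hint a b).const_mul _)]
  refine Finset.sum_congr rfl fun a _ => ?_
  rw [integral_finset_sum _ (fun b _ => (hint a b).const_mul _)]
  refine Finset.sum_congr rfl fun b _ => ?_
  rw [integral_const_mul, hC]

/-- Prediction error formula for the random coefficients model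
(Proposition 1 of MacEachern–Miyawaki, "On the two-dataset problem"). -/
theorem rcm_prediction_error
    {Ω : Type*} [MeasurableSpace Ω] (μ : Measure Ω) [IsProbabilityMeasure μ]
    {n₀ n₁ k : ℕ} (hn₁ : 0 < n₁)
    (X₀ : Matrix (Fin n₀) (Fin k) ℝ) (X₁ : Matrix (Fin n₁) (Fin k) ℝ)
    (hX₀ : IsUnit (X₀ᵀ * X₀).det)
    (hX₁std : ∀ l : Fin k, ∑ i : Fin n₁, (X₁ i l) ^ 2 = (n₁ : ℝ))
    (β₀ : Fin k → ℝ)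
    (ε₀ : Ω → Fin n₀ → ℝ) (ε₁ : Ω → Fin n₁ → ℝ) (η : Ω → Fin k → ℝ)
    (σ₀ σ₁ ση : ℝ)
    (hε₀L2 : ∀ i, MemLp (fun ω => ε₀ ω i) 2 μ)
    (hε₁L2 : ∀ i, MemLp (fun ω => ε₁ ω i) 2 μ)
    (hηL2 : ∀ l, MemLp (fun ω => η ω l) 2 μ)
    (hε₀m : ∀ i, ∫ ω, ε₀ ω i ∂μ = 0)
    (hε₁m : ∀ i, ∫ ω, ε₁ ω i ∂μ = 0)
    (hηm : ∀ l, ∫ ω, η ω l ∂μ = 0)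
    (hε₀v : ∀ i i', ∫ ω, ε₀ ω i * ε₀ ω i' ∂μ = if i = i' then σ₀ ^ 2 else 0)
    (hε₁v : ∀ i i', ∫ ω, ε₁ ω i * ε₁ ω i' ∂μ = if i = i' then σ₁ ^ 2 else 0)
    (hηv : ∀ l l', ∫ ω, η ω l * η ω l' ∂μ = if l = l' then ση ^ 2 else 0)
    (hc01 : ∀ i j, ∫ ω, ε₀ ω i * ε₁ ω j ∂μ = 0)
    (hc0η : ∀ i l, ∫ ω, ε₀ ω i * η ω l ∂μ = 0)
    (hc1η : ∀ j l, ∫ ω, ε₁ ω j * η ω l ∂μ = 0)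
    (y₀ : Ω → Fin n₀ → ℝ) (hy₀ : ∀ ω, y₀ ω = X₀ *ᵥ β₀ + ε₀ ω)
    (y₁ : Ω → Fin n₁ → ℝ) (hy₁ : ∀ ω, y₁ ω = X₁ *ᵥ (β₀ + η ω) + ε₁ ω)
    (yhat : Ω → Fin n₁ → ℝ)
    (hyhat : ∀ ω, yhat ω = (X₁ * (X₀ᵀ * X₀)⁻¹ * X₀ᵀ) *ᵥ y₀ ω) :
    (1 / (n₁ : ℝ)) * ∫ ω, (y₁ ω - yhat ω) ⬝ᵥ (y₁ ω - yhat ω) ∂μ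
      = σ₁ ^ 2 + (k : ℝ) * ση ^ 2
        + σ₀ ^ 2 / (n₁ : ℝ) * ((X₀ᵀ * X₀)⁻¹ * (X₁ᵀ * X₁)).trace := by
  set B : Matrix (Fin k) (Fin k) ℝ := (X₀ᵀ * X₀)⁻¹ with hB
  set A : Matrix (Fin n₁) (Fin n₀) ℝ := X₁ * B * X₀ᵀ with hA
  have hB1 : B * (X₀ᵀ * X₀) = 1 := Matrix.nonsing_inv_mul _ hX₀
  have hAX₀ : A * X₀ = X₁ := by
    rw [hA, Matrix.mul_assoc, Matrix.mul_assoc, hB1, Matrix.mul_one]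
  -- combined noise vector
  set Z : Ω → (Fin n₁ ⊕ (Fin k ⊕ Fin n₀)) → ℝ :=
    fun ω => Sum.elim (ε₁ ω) (Sum.elim (η ω) (ε₀ ω)) with hZ
  set M : Matrix (Fin n₁) (Fin n₁ ⊕ (Fin k ⊕ Fin n₀)) ℝ :=
    Matrix.of fun j => Sum.elim (fun j' => if j = j' then 1 else 0)
      (Sum.elim (fun l => X₁ j l) (fun i => -(A j i))) with hM
  set v : (Fin n₁ ⊕ (Fin k ⊕ Fin n₀)) → ℝ :=
    Sum.elim (fun _ => σ₁ ^ 2) (Sum.elim (fun _ => ση ^ 2) (fun _ => σ₀ ^ 2)) with hv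
  set C : (Fin n₁ ⊕ (Fin k ⊕ Fin n₀)) → (Fin n₁ ⊕ (Fin k ⊕ Fin n₀)) → ℝ :=
    fun a b => if a = b then v a else 0 with hCdef
  have hZL2 : ∀ a, MemLp (fun ω => Z ω a) 2 μ := by
    rintro (j | l | i)
    · exact hε₁L2 j
    · exact hηL2 l
    · exact hε₀L2 i
  have hC : ∀ a b, ∫ ω, Z ω a * Z ω b ∂μ = C a b := by
    rintro (j | l | i) (j' | l' | i') <;>
      simp only [hZ, hCdef, hv, Sum.elim_inl, Sum.elim_inr, Sum.inl.injEq, Sum.inr.injEq,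
        reduceCtorEq, if_false]
    · rw [hε₁v]
    · exact hc1η j l'
    · rw [int_mul_comm]; exact hc01 i' j
    · rw [int_mul_comm]; exact hc1η j' l
    · rw [hηv]
    · rw [int_mul_comm]; exact hc0η i' l
    · exact hc01 i j'
    · exact hc0η i l'
    · rw [hε₀v]
  have hd : ∀ ω, y₁ ω - yhat ω = M *ᵥ Z ω := by
    intro ω
    have h1 : y₁ ω - yhat ω = X₁ *ᵥ η ω + ε₁ ω - A *ᵥ ε₀ ω := by
      rw [hy₁, hyhat, hy₀, Matrix.mulVec_add, Matrix.mulVec_add, Matrix.mulVec_mulVec,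
        hAX₀]
      abel
    rw [h1]
    funext j
    simp only [hM, hZ, Matrix.mulVec, dotProduct, Matrix.of_apply, Fintype.sum_sum_type,
      Sum.elim_inl, Sum.elim_inr, Pi.add_apply, Pi.sub_apply, ite_mul, one_mul, zero_mul,
      Finset.sum_ite_eq, Finset.mem_univ, if_true, neg_mul]
    rw [Finset.sum_neg_distrib]
    ring
  have hmain := exp_quad μ Z hZL2 C hC M
  simp_rw [hd, hmain]
  -- collapse the covariance sum
  have hsum : ∀ (j : Fin n₁) (a : Fin n₁ ⊕ (Fin k ⊕ Fin n₀)),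
      ∑ b, M j a * M j b * C a b = M j a * M j a * v a := by
    intro j a
    simp only [hCdef, mul_ite, mul_zero, Finset.sum_ite_eq, Finset.mem_univ, if_true]
  simp_rw [hsum]
  have hAsq : ∑ j, ∑ i, A j i * A j i = (B * (X₁ᵀ * X₁)).trace := by
    have h1 : (Aᵀ * A).trace = ∑ j, ∑ i, A j i * A j i := by
      rw [Matrix.trace]
      simp only [Matrix.diag_apply, Matrix.mul_apply, Matrix.transpose_apply]
      rw [Finset.sum_comm]
    have hBsymm : Bᵀ = B := by
      rw [hB, Matrix.transpose_nonsing_inv, Matrix.transpose_mul, Matrix.transpose_transpose]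
    have h2 : (Aᵀ * A).trace = (B * (X₁ᵀ * X₁)).trace := by
      rw [hA, Matrix.transpose_mul, Matrix.transpose_mul, Matrix.transpose_transpose, hBsymm]
      rw [Matrix.mul_assoc, Matrix.trace_mul_comm]
      congr 1
      simp only [Matrix.mul_assoc]
      rw [hB1, Matrix.mul_one]
    rw [← h1, h2]
  have hfinal : ∑ j : Fin n₁, ∑ a, M j a * M j a * v a
      = (n₁ : ℝ) * σ₁ ^ 2 + ((k : ℝ) * (n₁ : ℝ)) * ση ^ 2
        + σ₀ ^ 2 * (B * (X₁ᵀ * X₁)).trace := by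
    simp only [hM, hv, Matrix.of_apply, Fintype.sum_sum_type, Sum.elim_inl, Sum.elim_inr,
      ite_mul, one_mul, zero_mul, mul_ite, mul_zero, mul_one, neg_mul, mul_neg, neg_neg,
      Finset.sum_ite_eq, Finset.mem_univ, if_true]
    rw [Finset.sum_add_distrib, Finset.sum_add_distrib]
    have e1 : ∑ _j : Fin n₁, σ₁ ^ 2 = (n₁ : ℝ) * σ₁ ^ 2 := by
      simp [Finset.sum_const, nsmul_eq_mul]
    have e2 : ∑ j : Fin n₁, ∑ l, X₁ j l * X₁ j l * ση ^ 2
        = ((k : ℝ) * (n₁ : ℝ)) * ση ^ 2 := by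
      rw [Finset.sum_comm]
      have : ∀ l : Fin k, ∑ j : Fin n₁, X₁ j l * X₁ j l * ση ^ 2 = (n₁ : ℝ) * ση ^ 2 := by
        intro l
        rw [← Finset.sum_mul]
        simp_rw [← sq]
        rw [hX₁std l]
      simp_rw [this]
      rw [Finset.sum_const]
      simp [nsmul_eq_mul]; ring
    have e3 : ∑ j : Fin n₁, ∑ i, A j i * A j i * σ₀ ^ 2
        = σ₀ ^ 2 * (B * (X₁ᵀ * X₁)).trace := by
      simp_rw [← Finset.sum_mul]
      rw [hAsq, mul_comm]
    rw [e1, e2, e3]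
    ring
  rw [hfinal]
  have hn : (n₁ : ℝ) ≠ 0 := Nat.cast_ne_zero.mpr hn₁.ne'
  field_simp
end

section
/- In the generalized random coefficients model, let Z₀ (n₀×k₀) with Z₀ᵀZ₀ invertible, W₁ (n₁×k₁) with W₁ᵀW₁ invertible, X₀ (n₀×k), X₁ (n₁×k) be real matrices; set M₀ = I − Z₀(Z₀ᵀZ₀)⁻¹Z₀ᵀ, M₁ = I − W₁(W₁ᵀW₁)⁻¹W₁ᵀ, X̃₀ = M₀X₀ with X̃₀ᵀX̃₀ invertible, and Q = X₁(X̃₀ᵀX̃₀)⁻¹X̃₀ᵀ. For arbitrary vectors α₀ ∈ ℝ^{k₀}, α₁ ∈ ℝ^{k₁}, β₀, η ∈ ℝᵏ, ε₀ ∈ ℝ^{n₀}, ε₁ ∈ ℝ^{n₁}, let y₀ = Z₀α₀ + X₀β₀ + ε₀, y₁ = W₁α₁ + X₁(β₀ + η) + ε₁, β̂₀ = (X̃₀ᵀX̃₀)⁻¹X̃₀ᵀy₀, α̂₁ = (W₁ᵀW₁)⁻¹W₁ᵀ(y₁ − X₁β̂₀), and ŷ_{1|0} = W₁α̂₁ +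 X₁β̂₀. Then y₁ − ŷ_{1|0} = M₁(y₁ − Q·y₀) = M₁(ε₁ + X₁η − Q·ε₀). -/
open Matrix

/-- Exact residual identity in the generalized random coefficients model:
`y₁ − ŷ_{1|0} = M₁(y₁ − Q·y₀) = M₁(ε₁ + X₁η − Q·ε₀)`. -/
theorem generalized_rcm_residual_identity
    {n₀ n₁ k₀ k₁ k : ℕ}
    (Z₀ : Matrix (Fin n₀) (Fin k₀) ℝ) (W₁ : Matrix (Fin n₁) (Fin k₁) ℝ)
    (X₀ : Matrix (Fin n₀) (Fin k) ℝ) (X₁ : Matrix (Fin n₁) (Fin k) ℝ)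
    (hZ₀ : IsUnit (Z₀ᵀ * Z₀).det) (hW₁ : IsUnit (W₁ᵀ * W₁).det)
    (M₀ : Matrix (Fin n₀) (Fin n₀) ℝ) (hM₀ : M₀ = 1 - Z₀ * (Z₀ᵀ * Z₀)⁻¹ * Z₀ᵀ)
    (M₁ : Matrix (Fin n₁) (Fin n₁) ℝ) (hM₁ : M₁ = 1 - W₁ * (W₁ᵀ * W₁)⁻¹ * W₁ᵀ)
    (X₀t : Matrix (Fin n₀) (Fin k) ℝ) (hX₀t : X₀t = M₀ * X₀)
    (hX₀tX₀t : IsUnit (X₀tᵀ * X₀t).det)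
    (Q : Matrix (Fin n₁) (Fin n₀) ℝ) (hQ : Q = X₁ * (X₀tᵀ * X₀t)⁻¹ * X₀tᵀ)
    (α₀ : Fin k₀ → ℝ) (α₁ : Fin k₁ → ℝ) (β₀ η : Fin k → ℝ)
    (ε₀ : Fin n₀ → ℝ) (ε₁ : Fin n₁ → ℝ)
    (y₀ : Fin n₀ → ℝ) (hy₀ : y₀ = Z₀ *ᵥ α₀ + X₀ *ᵥ β₀ + ε₀)
    (y₁ : Fin n₁ → ℝ) (hy₁ : y₁ = W₁ *ᵥ α₁ + X₁ *ᵥ (β₀ + η) + ε₁)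
    (βhat : Fin k → ℝ) (hβhat : βhat = (X₀tᵀ * X₀t)⁻¹ *ᵥ (X₀tᵀ *ᵥ y₀))
    (αhat : Fin k₁ → ℝ)
    (hαhat : αhat = (W₁ᵀ * W₁)⁻¹ *ᵥ (W₁ᵀ *ᵥ (y₁ - X₁ *ᵥ βhat)))
    (yhat : Fin n₁ → ℝ) (hyhat : yhat = W₁ *ᵥ αhat + X₁ *ᵥ βhat) :
    y₁ - yhat = M₁ *ᵥ (y₁ - Q *ᵥ y₀)
      ∧ y₁ - yhat = M₁ *ᵥ (ε₁ + X₁ *ᵥ η - Q *ᵥ ε₀) := by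
  have hB₀ : (Z₀ᵀ * Z₀)⁻¹ * (Z₀ᵀ * Z₀) = 1 := Matrix.nonsing_inv_mul _ hZ₀
  have hBW : (W₁ᵀ * W₁)⁻¹ * (W₁ᵀ * W₁) = 1 := Matrix.nonsing_inv_mul _ hW₁
  have hBX : (X₀tᵀ * X₀t)⁻¹ * (X₀tᵀ * X₀t) = 1 := Matrix.nonsing_inv_mul _ hX₀tX₀t
  have hM₀Z : M₀ * Z₀ = 0 := by
    rw [hM₀, Matrix.sub_mul, Matrix.one_mul, Matrix.mul_assoc (Z₀ * (Z₀ᵀ * Z₀)⁻¹),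
      Matrix.mul_assoc Z₀, hB₀, Matrix.mul_one, sub_self]
  have hMW : M₁ * W₁ = 0 := by
    rw [hM₁, Matrix.sub_mul, Matrix.one_mul, Matrix.mul_assoc (W₁ * (W₁ᵀ * W₁)⁻¹),
      Matrix.mul_assoc W₁, hBW, Matrix.mul_one, sub_self]
  have hM₀T : M₀ᵀ = M₀ := by
    rw [hM₀]
    simp [transpose_sub, transpose_mul, Matrix.transpose_nonsing_inv, Matrix.mul_assoc]
  have hM₀idem : M₀ * M₀ = M₀ := by
    nth_rewrite 2 [hM₀]
    rw [Matrix.mul_sub, Matrix.mul_one, ← Matrix.mul_assoc, ← Matrix.mul_assoc, hM₀Z,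
      Matrix.zero_mul, Matrix.zero_mul, sub_zero]
  have hXtZ : X₀tᵀ * Z₀ = 0 := by
    rw [hX₀t, transpose_mul, hM₀T, Matrix.mul_assoc, hM₀Z, Matrix.mul_zero]
  have hXt : X₀tᵀ * X₀t = X₀tᵀ * X₀ := by
    simp only [hX₀t, transpose_mul, hM₀T, Matrix.mul_assoc]
    rw [← Matrix.mul_assoc M₀ M₀ X₀, hM₀idem]
  have hQX : Q * X₀ = X₁ := by
    rw [hQ, Matrix.mul_assoc, ← hXt, Matrix.mul_assoc X₁, hBX, Matrix.mul_one]
  have hQZ : Q * Z₀ = 0 := by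
    rw [hQ, Matrix.mul_assoc, hXtZ, Matrix.mul_zero]
  have hXβ : X₁ *ᵥ βhat = Q *ᵥ y₀ := by
    rw [hβhat, hQ]
    simp [Matrix.mulVec_mulVec, Matrix.mul_assoc]
  have h1 : y₁ - yhat = M₁ *ᵥ (y₁ - Q *ᵥ y₀) := by
    rw [hyhat, hαhat, ← hXβ, hM₁]
    simp only [Matrix.sub_mulVec, Matrix.mulVec_mulVec, Matrix.one_mulVec,
      Matrix.mul_assoc]
    abel
  refine ⟨h1, h1.trans ?_⟩
  rw [hy₀, hy₁]
  simp only [Matrix.mulVec_add, Matrix.mulVec_sub, Matrix.sub_mulVec,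
    Matrix.mulVec_mulVec, hQZ, hQX, hMW, Matrix.zero_mulVec, Matrix.mulVec_zero]
  abel
end

section
/- (Frisch–Waugh theorem.) Let Z be a real n×p matrix with ZᵀZ invertible and X a real n×k matrix; set M = I − Z(ZᵀZ)⁻¹Zᵀ and X̃ = MX, and assume X̃ᵀX̃ is invertible. Let y ∈ ℝⁿ, and suppose (γ̂, β̂) ∈ ℝᵖ × ℝᵏ satisfy the least-squares normal equations for the regression of y on the combined design [Z X], i.e., Zᵀ(y − Zγ̂ − Xβ̂) = 0 and Xᵀ(y − Zγ̂ − Xβ̂) = 0. Then β̂ = (X̃ᵀX̃)⁻¹X̃ᵀy. -/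
open Matrix

/-- Frisch–Waugh theorem: if `(γ̂, β̂)` satisfy the least-squares normal
equations for regressing `y` on `[Z X]`, then `β̂ = (X̃ᵀX̃)⁻¹X̃ᵀy`,
where `X̃ = MX` and `M = I − Z(ZᵀZ)⁻¹Zᵀ`. -/
theorem frisch_waugh
    {n p k : ℕ}
    (Z : Matrix (Fin n) (Fin p) ℝ) (X : Matrix (Fin n) (Fin k) ℝ)
    (hZ : IsUnit (Zᵀ * Z).det)
    (M : Matrix (Fin n) (Fin n) ℝ) (hM : M = 1 - Z * (Zᵀ * Z)⁻¹ * Zᵀ)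
    (Xt : Matrix (Fin n) (Fin k) ℝ) (hXt : Xt = M * X)
    (hXtXt : IsUnit (Xtᵀ * Xt).det)
    (y : Fin n → ℝ) (γhat : Fin p → ℝ) (βhat : Fin k → ℝ)
    (hNE1 : Zᵀ *ᵥ (y - Z *ᵥ γhat - X *ᵥ βhat) = 0)
    (hNE2 : Xᵀ *ᵥ (y - Z *ᵥ γhat - X *ᵥ βhat) = 0) :
    βhat = (Xtᵀ * Xt)⁻¹ *ᵥ (Xtᵀ *ᵥ y) := by
  set r : Fin n → ℝ := y - Z *ᵥ γhat - X *ᵥ βhat with hr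
  -- symmetry of (ZᵀZ)⁻¹
  have hinv_sym : ((Zᵀ * Z)⁻¹)ᵀ = (Zᵀ * Z)⁻¹ := by
    rw [Matrix.transpose_nonsing_inv, Matrix.transpose_mul, Matrix.transpose_transpose]
  -- M is symmetric
  have hMsym : Mᵀ = M := by
    rw [hM, Matrix.transpose_sub, Matrix.transpose_one, Matrix.transpose_mul,
      Matrix.transpose_mul, Matrix.transpose_transpose, hinv_sym, Matrix.mul_assoc]
  -- M annihilates Z
  have hMZ : M * Z = 0 := by
    rw [hM, Matrix.sub_mul, Matrix.one_mul, Matrix.mul_assoc, Matrix.mul_assoc,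
      Matrix.nonsing_inv_mul _ hZ]
    simp
  -- M is idempotent
  have hMM : M * M = M := by
    nth_rewrite 2 [hM]
    rw [Matrix.mul_sub, Matrix.mul_one, ← Matrix.mul_assoc, ← Matrix.mul_assoc, hMZ]
    simp
  -- Xtᵀ X = Xtᵀ Xt
  have hMMX : M * (M * X) = M * X := by rw [← Matrix.mul_assoc, hMM]
  have hXtX : Xtᵀ * X = Xtᵀ * Xt := by
    rw [hXt, Matrix.transpose_mul, hMsym, Matrix.mul_assoc, Matrix.mul_assoc, hMMX]
  -- Xtᵀ r = 0
  have hXtr : Xtᵀ *ᵥ r = 0 := by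
    have : Xtᵀ = Xᵀ * M := by rw [hXt, Matrix.transpose_mul, hMsym]
    rw [this, hM, Matrix.mul_sub, Matrix.mul_one, Matrix.sub_mulVec]
    simp only [← Matrix.mulVec_mulVec]
    rw [hNE1, hNE2]
    simp
  -- Xtᵀ Xt βhat = Xtᵀ y
  have key : (Xtᵀ * Xt) *ᵥ βhat = Xtᵀ *ᵥ y := by
    have hZr : Xtᵀ *ᵥ (Z *ᵥ γhat) = 0 := by
      have : Xtᵀ * Z = 0 := by
        rw [hXt, Matrix.transpose_mul, hMsym, Matrix.mul_assoc, hMZ, Matrix.mul_zero]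
      rw [Matrix.mulVec_mulVec, this, Matrix.zero_mulVec]
    have h0 : Xtᵀ *ᵥ y - Xtᵀ *ᵥ (Z *ᵥ γhat) - Xtᵀ *ᵥ (X *ᵥ βhat) = 0 := by
      rw [← Matrix.mulVec_sub, ← Matrix.mulVec_sub]; exact hXtr
    rw [hZr, sub_zero, sub_eq_zero] at h0
    rw [h0, Matrix.mulVec_mulVec, hXtX]
  calc βhat = ((Xtᵀ * Xt)⁻¹ * (Xtᵀ * Xt)) *ᵥ βhat := by
        rw [Matrix.nonsing_inv_mul _ hXtXt, Matrix.one_mulVec]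
    _ = (Xtᵀ * Xt)⁻¹ *ᵥ (Xtᵀ *ᵥ y) := by
        rw [← Matrix.mulVec_mulVec, key]
end
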